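/- arXiv:1508.05963 — 2 statements merged into one kernel-verified Lean document; each statement's English description precedes it below -/
import Mathlib

section
/- For σ ≤ τ in the consecutive pattern poset, the Möbius function satisfies: μ(σ,τ) = μ(σ, x(τ)) if |τ|−|σ| > 2 and σ ≤ x(τ) and x(τ) ≰ i(τ); μ(σ,τ) = 1 if |τ|−|σ| = 2, τ is not monotone, and σ = i(τ) or σ = x(τ); μ(σ,τ) = (−1)^{|τ|−|σ|} if |τ|−|σ| < 2; and μ(σ,τ) = 0 in all other cases. -/
open scoped Classical

noncomputable section

/-- A permutation of length `n`, written in one-line notation as `τ 0, τ 1, …, τ (n-1)`. -/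
abbrev Perm' (n : ℕ) := Equiv.Perm (Fin n)

/-- `σ` occurs in `τ` as a consecutive pattern at (0-indexed) starting position `i`:
the window `τ i, …, τ (i+m-1)` of adjacent entries is in the same relative order as `σ`. -/
def OccursAt {m n : ℕ} (σ : Perm' m) (τ : Perm' n) (i : ℕ) : Prop :=
  ∃ h : i + m ≤ n, ∀ a b : Fin m,
    σ a < σ b ↔
      τ ⟨i + a, by have := a.isLt; omega⟩ < τ ⟨i + b, by have := b.isLt; omega⟩

/-- Consecutive pattern containment `σ ≤ τ`. -/
def PattLE {m n : ℕ} (σ : Perm' m) (τ : Perm' n) : Prop :=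
  ∃ i, OccursAt σ τ i

/-- Permutations of arbitrary length: the carrier of the consecutive pattern poset. -/
abbrev PermS : Type := Σ n : ℕ, Perm' n

/-- The order of the consecutive pattern poset. -/
def pLE (p q : PermS) : Prop := PattLE p.2 q.2

/-- The strict order of the consecutive pattern poset. -/
def pLT (p q : PermS) : Prop := pLE p q ∧ p ≠ q

/-- The covering relation of the consecutive pattern poset. -/
def pCovBy (p q : PermS) : Prop :=
  pLT p q ∧ ∀ r : PermS, pLT p r → pLT r q → False

/-- The open interval `(p,q)` in the consecutive pattern poset. -/
def openInterval (p q : PermS) : Set PermS := {r | pLT p r ∧ pLT r q}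

/-- The Hasse diagram of the open interval `(p,q)`: vertices are the permutations strictly
between `p` and `q`, edges are the covering relations of the consecutive pattern poset. -/
def hasse (p q : PermS) : SimpleGraph (openInterval p q) :=
  SimpleGraph.fromRel fun a b => pCovBy a.1 b.1

/-- The interval `[p,q]` is disconnected if the Hasse diagram of `(p,q)` is not connected. -/
def IntervalDisconnected (p q : PermS) : Prop := ¬ (hasse p q).Connected

/-- `window τ i m` is the reduction of the window of `τ` of length `m` starting at
(0-indexed) position `i`, i.e. the pattern `τ[i+1, i+m]` in 1-indexed notation. -/
def window {n : ℕ} (τ : Perm' n) (i m : ℕ) : Perm' m :=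
  if h : i + m ≤ n then
    (Tuple.sort fun a : Fin m => τ ⟨i + a, by have := a.isLt; omega⟩)⁻¹
  else 1

/-- `τ` is monotone, i.e. equal to `12…n` or `n…21`. -/
def IsMonotone {n : ℕ} (τ : Perm' n) : Prop :=
  (∀ a b : Fin n, a ≤ b → τ a ≤ τ b) ∨ (∀ a b : Fin n, a ≤ b → τ b ≤ τ a)

/-- `τ` has a bifix (a common proper prefix and proper suffix) of length `k`. -/
def HasBifixLen {n : ℕ} (τ : Perm' n) (k : ℕ) : Prop :=
  0 < k ∧ k < n ∧ window τ 0 k = window τ (n - k) k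

/-- The length `|x(τ)|` of the exterior of `τ`, the longest bifix of `τ`. -/
def extLen {n : ℕ} (τ : Perm' n) : ℕ := Nat.findGreatest (HasBifixLen τ) n

/-- The exterior `x(τ)` of `τ`: its longest bifix. -/
def extPerm {n : ℕ} (τ : Perm' n) : Perm' (extLen τ) := window τ 0 (extLen τ)

/-- The interior `i(τ) = τ[2,n-1]` of `τ`. -/
def intPerm {n : ℕ} (τ : Perm' n) : Perm' (n - 2) := window τ 1 (n - 2)

/-- `p` straddles `q`: `p < q`, `p` is both a prefix and a suffix of `q`,
and `p` has no other occurrence in `q`. -/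
def Straddles (p q : PermS) : Prop :=
  pLT p q ∧ OccursAt p.2 q.2 0 ∧ OccursAt p.2 q.2 (q.1 - p.1) ∧
    ∀ i, OccursAt p.2 q.2 i → i = 0 ∨ i = q.1 - p.1

/-- The interval `[p,q]` contains a non-trivial disconnected subinterval, i.e. a
subinterval `[a,b]` of rank at least 3 which is disconnected. -/
def HasNontrivDisconSub (p q : PermS) : Prop :=
  ∃ a b : PermS, pLE p a ∧ pLE a b ∧ pLE b q ∧ a.1 + 3 ≤ b.1 ∧ IntervalDisconnected a b

/-- The finite set of all permutations of length at most `N`. -/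
def permsUpTo (N : ℕ) : Finset PermS :=
  (Finset.range (N + 1)).sigma fun n => (Finset.univ : Finset (Perm' n))

/-- The closed interval `[p,q]` of the consecutive pattern poset, as a finite set. -/
def intervalF (p q : PermS) : Finset PermS :=
  (permsUpTo q.1).filter fun r => pLE p r ∧ pLE r q

/-- The number of elements of the interval `[σ,τ]` of rank `r`, i.e. of length `|σ| + r`. -/
def rankCard {m n : ℕ} (σ : Perm' m) (τ : Perm' n) (r : ℕ) : ℕ :=
  ((permsUpTo n).filter fun p => pLE ⟨m, σ⟩ p ∧ pLE p ⟨n, τ⟩ ∧ p.1 = m + r).card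

/-- The direct sum `σ ⊕ π` of two permutations. -/
def dsum {m k : ℕ} (σ : Perm' m) (π : Perm' k) : Perm' (m + k) :=
  finSumFinEquiv.permCongr (σ.sumCongr π)


/-- Two permutations with the same relative order are equal. -/
theorem perm_eq_of_iff {m : ℕ} (σ σ' : Perm' m)
    (h : ∀ a b : Fin m, σ a < σ b ↔ σ' a < σ' b) : σ = σ' := by
  let e : Fin m ≃o Fin m :=
    { toEquiv := σ.symm.trans σ'
      map_rel_iff' := by
        intro a b
        simp only [Equiv.trans_apply]
        rw [← not_lt, ← not_lt, ← h (σ.symm b) (σ.symm a)]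
        simp }
  have he : e = OrderIso.refl (Fin m) := Subsingleton.elim _ _
  ext a
  have h3 : e (σ a) = σ a := by rw [he]; rfl
  have h4 : σ' (σ.symm (σ a)) = σ a := h3
  rw [Equiv.symm_apply_apply] at h4
  exact congrArg Fin.val h4.symm

theorem window_lt_iff {n : ℕ} (τ : Perm' n) {i m : ℕ} (h : i + m ≤ n) (a b : Fin m) :
    window τ i m a < window τ i m b ↔
      τ ⟨i + a, by have := a.isLt; omega⟩ < τ ⟨i + b, by have := b.isLt; omega⟩ := by
  have hw : window τ i m = (Tuple.sort fun a : Fin m =>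
      τ ⟨i + a, by have := a.isLt; omega⟩)⁻¹ := by
    rw [window, dif_pos h]
  set f : Fin m → Fin n := fun a => τ ⟨i + a, by have := a.isLt; omega⟩ with hf
  have hfinj : Function.Injective f := by
    intro a b hab
    have := τ.injective hab
    have h2 : i + (a : ℕ) = i + (b : ℕ) := congrArg Fin.val this
    exact Fin.ext (by omega)
  have hsm : StrictMono (f ∘ Tuple.sort f) :=
    (Tuple.monotone_sort f).strictMono_of_injective
      (hfinj.comp (Tuple.sort f).injective)
  have key : ∀ x : Fin m, f x = (f ∘ Tuple.sort f) ((Tuple.sort f)⁻¹ x) := by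
    intro x; simp
  rw [hw]
  constructor
  · intro hlt
    have := hsm hlt
    simpa [← key] using this
  · intro hlt
    have : (f ∘ Tuple.sort f) ((Tuple.sort f)⁻¹ a) < (f ∘ Tuple.sort f) ((Tuple.sort f)⁻¹ b) := by
      simpa [← key] using hlt
    exact hsm.lt_iff_lt.mp this

theorem occursAt_window {n : ℕ} (τ : Perm' n) {i m : ℕ} (h : i + m ≤ n) :
    OccursAt (window τ i m) τ i :=
  ⟨h, fun a b => window_lt_iff τ h a b⟩

theorem OccursAt.le {m n : ℕ} {σ : Perm' m} {τ : Perm' n} {i : ℕ}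
    (h : OccursAt σ τ i) : i + m ≤ n := h.1

theorem occursAt_iff_window {m n : ℕ} {σ : Perm' m} {τ : Perm' n} {i : ℕ} (h : i + m ≤ n) :
    OccursAt σ τ i ↔ σ = window τ i m := by
  constructor
  · intro ⟨_, ho⟩
    exact perm_eq_of_iff _ _ (fun a b => (ho a b).trans (window_lt_iff τ h a b).symm)
  · rintro rfl; exact occursAt_window τ h

theorem occursAt_trans {k m n : ℕ} {ρ : Perm' k} {σ : Perm' m} {τ : Perm' n} {i j : ℕ}
    (h1 : OccursAt ρ σ j) (h2 : OccursAt σ τ i) : OccursAt ρ τ (i + j) := by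
  obtain ⟨hb1, ho1⟩ := h1
  obtain ⟨hb2, ho2⟩ := h2
  refine ⟨by omega, fun a b => ?_⟩
  rw [ho1 a b]
  have := ho2 ⟨j + a, by have := a.isLt; omega⟩ ⟨j + b, by have := b.isLt; omega⟩
  convert this using 3 <;> (apply Fin.ext; simp; omega)

theorem pattLE_refl {m : ℕ} (σ : Perm' m) : PattLE σ σ := by
  refine ⟨0, by omega, fun a b => ?_⟩
  have : ∀ c : Fin m, (⟨0 + (c : ℕ), by have := c.isLt; omega⟩ : Fin m) = c := by
    intro c; apply Fin.ext; simp
  rw [this a, this b]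

theorem pattLE_trans {k m n : ℕ} {ρ : Perm' k} {σ : Perm' m} {τ : Perm' n}
    (h1 : PattLE ρ σ) (h2 : PattLE σ τ) : PattLE ρ τ := by
  obtain ⟨j, h1⟩ := h1; obtain ⟨i, h2⟩ := h2
  exact ⟨i + j, occursAt_trans h1 h2⟩

theorem PattLE.length_le {m n : ℕ} {σ : Perm' m} {τ : Perm' n} (h : PattLE σ τ) : m ≤ n := by
  obtain ⟨i, hb, -⟩ := h; omega

theorem pattLE_antisymm {n : ℕ} {σ τ : Perm' n} (h : PattLE σ τ) : σ = τ := by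
  obtain ⟨i, hb, ho⟩ := h
  have hi : i = 0 := by omega
  subst hi
  refine perm_eq_of_iff _ _ (fun a b => ?_)
  rw [ho a b]
  constructor <;> intro hh <;>
  · convert hh using 3 <;> omega

theorem pLE_refl (p : PermS) : pLE p p := pattLE_refl p.2

theorem pLE_trans {p q r : PermS} (h1 : pLE p q) (h2 : pLE q r) : pLE p r :=
  pattLE_trans h1 h2

theorem pLE.length_le {p q : PermS} (h : pLE p q) : p.1 ≤ q.1 := PattLE.length_le h

theorem pLE_antisymm {p q : PermS} (h1 : pLE p q) (h2 : pLE q p) : p = q := by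
  obtain ⟨m, σ⟩ := p; obtain ⟨n, τ⟩ := q
  have : m = n := le_antisymm h1.length_le h2.length_le
  subst this
  exact congrArg _ (pattLE_antisymm h1)

theorem occursAt_in_window {n : ℕ} (τ : Perm' n) {j k : ℕ} (hjk : j + k ≤ n)
    {l i : ℕ} {r : Perm' l} (h : OccursAt r τ i) (h1 : j ≤ i) (h2 : i + l ≤ j + k) :
    OccursAt r (window τ j k) (i - j) := by
  refine ⟨by omega, fun a b => ?_⟩
  rw [h.2 a b, window_lt_iff τ hjk]
  constructor <;> intro hh <;> (convert hh using 3 <;> simp <;> omega)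

theorem occursAt_of_window {n : ℕ} {τ : Perm' n} {j k : ℕ} (hjk : j + k ≤ n)
    {l t : ℕ} {r : Perm' l} (h : OccursAt r (window τ j k) t) : OccursAt r τ (j + t) :=
  occursAt_trans h (occursAt_window τ hjk)

theorem window_window {n : ℕ} (τ : Perm' n) {i m j k : ℕ} (hi : i + m ≤ n) (hj : j + k ≤ m) :
    window (window τ i m) j k = window τ (i + j) k := by
  apply perm_eq_of_iff
  intro a b
  rw [window_lt_iff _ hj, window_lt_iff τ hi, window_lt_iff τ (by omega : (i+j)+k ≤ n)]
  constructor <;> intro hh <;> (convert hh using 3 <;> simp <;> omega)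

theorem incr_lt_iff {n : ℕ} {τ : Perm' n} (h : ∀ a b : Fin n, a ≤ b → τ a ≤ τ b)
    (x y : Fin n) : τ x < τ y ↔ x < y := by
  constructor
  · intro hl
    by_contra hc
    push_neg at hc
    exact absurd (h y x hc) (not_le.mpr hl)
  · intro hl
    exact lt_of_le_of_ne (h x y hl.le) (fun he => absurd (τ.injective he) (ne_of_lt hl))

theorem decr_lt_iff {n : ℕ} {τ : Perm' n} (h : ∀ a b : Fin n, a ≤ b → τ b ≤ τ a)
    (x y : Fin n) : τ x < τ y ↔ y < x := by
  constructor
  · intro hl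
    by_contra hc
    push_neg at hc
    exact absurd (h x y hc) (not_le.mpr hl)
  · intro hl
    exact lt_of_le_of_ne (h y x hl.le) (fun he => absurd (τ.injective he) (ne_of_gt hl))

theorem isMonotone_window_eq {n : ℕ} {τ : Perm' n} (hmono : IsMonotone τ) {i i' m : ℕ}
    (hi : i + m ≤ n) (hi' : i' + m ≤ n) : window τ i m = window τ i' m := by
  apply perm_eq_of_iff
  intro a b
  rw [window_lt_iff τ hi, window_lt_iff τ hi']
  rcases hmono with h | h
  · rw [incr_lt_iff h, incr_lt_iff h]
    simp only [Fin.mk_lt_mk]; omega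
  · rw [decr_lt_iff h, decr_lt_iff h]
    simp only [Fin.mk_lt_mk]; omega

theorem perm_lt_congr {n : ℕ} (τ : Perm' n) {x y x' y' : ℕ} {hx : x < n} {hy : y < n}
    {hx' : x' < n} {hy' : y' < n} (ex : x = x') (ey : y = y') :
    (τ ⟨x, hx⟩ < τ ⟨y, hy⟩) ↔ (τ ⟨x', hx'⟩ < τ ⟨y', hy'⟩) := by
  subst ex; subst ey; exact Iff.rfl

theorem isMonotone_of_shift {n : ℕ} {τ : Perm' n}
    (h : window τ 0 (n-1) = window τ 1 (n-1)) : IsMonotone τ := by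
  rcases Nat.lt_or_ge n 2 with hn | hn
  · left; intro a b hab
    have : a = b := by
      apply Fin.ext; have := a.isLt; have := b.isLt; omega
    rw [this]
  have h0 : 0 + (n-1) ≤ n := by omega
  have h1 : 1 + (n-1) ≤ n := by omega
  have shift : ∀ x y : ℕ, (hx : x < n-1) → (hy : y < n-1) →
      (τ ⟨x, by omega⟩ < τ ⟨y, by omega⟩ ↔ τ ⟨x+1, by omega⟩ < τ ⟨y+1, by omega⟩) := by
    intro x y hx hy
    have w0 := window_lt_iff τ h0 ⟨x, hx⟩ ⟨y, hy⟩
    have w1 := window_lt_iff τ h1 ⟨x, hx⟩ ⟨y, hy⟩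
    rw [h] at w0
    rw [w1] at w0
    refine (perm_lt_congr τ ?_ ?_).trans (w0.symm.trans (perm_lt_congr τ ?_ ?_)) <;> simp <;> omega
  have adj : ∀ j, (hj : j + 1 < n) → (τ ⟨j, by omega⟩ < τ ⟨j+1, by omega⟩ ↔
      τ ⟨0, by omega⟩ < τ ⟨1, by omega⟩) := by
    intro j
    induction j with
    | zero => intro hj; exact Iff.rfl
    | succ j ih =>
      intro hj
      have hs := shift j (j+1) (by omega) (by omega)
      exact hs.symm.trans (ih (by omega))
  by_cases hasc : τ ⟨0, by omega⟩ < τ ⟨1, by omega⟩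
  · left
    have step : ∀ j, (hj : j+1 < n) → τ ⟨j, by omega⟩ < τ ⟨j+1, by omega⟩ :=
      fun j hj => (adj j hj).mpr hasc
    have main : ∀ d x, (hx : x + d < n) → τ ⟨x, by omega⟩ ≤ τ ⟨x+d, by omega⟩ := by
      intro d
      induction d with
      | zero => intro x hx; exact le_of_eq (congrArg τ (Fin.ext (by simp)))
      | succ d ih =>
        intro x hx
        exact le_trans (ih x (by omega)) (le_of_lt (step (x+d) (by omega)))
    intro a b hab
    have hv : (a:ℕ) ≤ (b:ℕ) := hab
    have hm := main ((b:ℕ) - (a:ℕ)) (a:ℕ) (by have := b.isLt; omega)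
    have hb : b = (⟨(a:ℕ) + ((b:ℕ) - (a:ℕ)), by have := b.isLt; omega⟩ : Fin n) :=
      Fin.ext (by simp; omega)
    rw [hb]
    exact hm
  · right
    have step : ∀ j, (hj : j+1 < n) → τ ⟨j+1, by omega⟩ < τ ⟨j, by omega⟩ := by
      intro j hj
      refine lt_of_le_of_ne (not_lt.mp (fun hh => hasc ((adj j hj).mp hh))) ?_
      intro he
      have h2 := τ.injective he
      have h3 : j + 1 = j := congrArg Fin.val h2
      omega
    have main : ∀ d x, (hx : x + d < n) → τ ⟨x+d, by omega⟩ ≤ τ ⟨x, by omega⟩ := by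
      intro d
      induction d with
      | zero => intro x hx; exact le_of_eq (congrArg τ (Fin.ext (by simp)))
      | succ d ih =>
        intro x hx
        exact le_trans (le_of_lt (step (x+d) (by omega))) (ih x (by omega))
    intro a b hab
    have hv : (a:ℕ) ≤ (b:ℕ) := hab
    have hm := main ((b:ℕ) - (a:ℕ)) (a:ℕ) (by have := b.isLt; omega)
    have hb : b = (⟨(a:ℕ) + ((b:ℕ) - (a:ℕ)), by have := b.isLt; omega⟩ : Fin n) :=
      Fin.ext (by simp; omega)
    rw [hb]
    exact hm

theorem hasBifixLen_extLen {n : ℕ} {τ : Perm' n} (h : extLen τ ≠ 0) :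
    HasBifixLen τ (extLen τ) := by
  have := (Nat.findGreatest_eq_iff (P := HasBifixLen τ) (k := n)).1 rfl
  exact this.2.1 h

theorem le_extLen {n : ℕ} {τ : Perm' n} {k : ℕ} (h : HasBifixLen τ k) : k ≤ extLen τ :=
  Nat.le_findGreatest (le_of_lt h.2.1) h

theorem mono_hasBifix {n : ℕ} {τ : Perm' n} (h : IsMonotone τ) (hn : 2 ≤ n) :
    HasBifixLen τ (n-1) := by
  refine ⟨by omega, by omega, ?_⟩
  have : n - (n-1) = 1 := by omega
  rw [this]
  exact isMonotone_window_eq h (by omega) (by omega)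

theorem extLen_mono {n : ℕ} {τ : Perm' n} (h : IsMonotone τ) (hn : 2 ≤ n) :
    extLen τ = n - 1 := by
  have h1 := le_extLen (mono_hasBifix h hn)
  have h2 : extLen τ ≠ 0 := by omega
  have h3 := (hasBifixLen_extLen h2).2.1
  omega

theorem prefix_lt_ext_le_interior {n : ℕ} {τ : Perm' n} {k : ℕ} (hk : 0 < k)
    (hke : k < extLen τ) : PattLE (window τ 0 k) (intPerm τ) := by
  obtain ⟨hepos, hen, heq⟩ := hasBifixLen_extLen (τ := τ) (by omega)
  have h1 : window τ 0 k = window τ (n - extLen τ) k := by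
    have c1 : window (window τ 0 (extLen τ)) 0 k = window τ (0 + 0) k :=
      window_window τ (by omega) (by omega)
    have c2 : window (window τ (n - extLen τ) (extLen τ)) 0 k = window τ ((n - extLen τ) + 0) k :=
      window_window τ (by omega) (by omega)
    rw [heq] at c1
    rw [c2] at c1
    simpa using c1.symm
  have occ : OccursAt (window τ 0 k) τ (n - extLen τ) := by
    rw [h1]; exact occursAt_window τ (by omega)
  have occ2 := occursAt_in_window τ (j := 1) (k := n-2) (by omega) occ (by omega) (by omega)
  exact ⟨_, occ2⟩

theorem sigma_eq' {a b : ℕ} {x : Perm' a} {y : Perm' b} (h : a = b) (h2 : PattLE x y) :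
    (⟨a, x⟩ : PermS) = ⟨b, y⟩ := by
  subst h; exact congrArg _ (pattLE_antisymm h2)

theorem pLE_eq_of_len {p r : PermS} (h : pLE p r) (hl : p.1 = r.1) : p = r := by
  obtain ⟨a, x⟩ := p; obtain ⟨b, y⟩ := r
  exact sigma_eq' hl h

theorem permS_eq_window {r : PermS} {n : ℕ} {τ : Perm' n} {i : ℕ} (h : OccursAt r.2 τ i) :
    r = ⟨r.1, window τ i r.1⟩ := by
  have h2 := (occursAt_iff_window h.le).1 h
  calc r = ⟨r.1, r.2⟩ := (Sigma.eta r).symm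
  _ = ⟨r.1, window τ i r.1⟩ := by rw [h2]

theorem mem_permsUpTo {N : ℕ} {r : PermS} : r ∈ permsUpTo N ↔ r.1 ≤ N := by
  unfold permsUpTo
  rw [Finset.mem_sigma]
  simp [Nat.lt_succ_iff]

theorem mem_intervalF {p q r : PermS} : r ∈ intervalF p q ↔ pLE p r ∧ pLE r q := by
  unfold intervalF
  rw [Finset.mem_filter, mem_permsUpTo]
  constructor
  · rintro ⟨-, h⟩; exact h
  · rintro ⟨h1, h2⟩; exact ⟨h2.length_le, h1, h2⟩

theorem sum_interval_eq (μ : PermS → PermS → ℤ)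
    (hrefl : ∀ p : PermS, 1 ≤ p.1 → μ p p = 1)
    (hsum : ∀ p q : PermS, 1 ≤ p.1 → pLT p q → ∑ r ∈ intervalF p q, μ p r = 0)
    {p : PermS} (hp : 1 ≤ p.1) (Y : PermS) :
    ∑ r ∈ intervalF p Y, μ p r = if p = Y then 1 else 0 := by
  by_cases hpy : p = Y
  · rw [if_pos hpy, ← hpy]
    have h1 : intervalF p p = {p} := by
      ext r
      rw [mem_intervalF, Finset.mem_singleton]
      constructor
      · rintro ⟨h1, h2⟩; exact (pLE_antisymm h2 h1)
      · intro h; simp only [h]; exact ⟨pLE_refl p, pLE_refl p⟩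
    rw [h1, Finset.sum_singleton]
    exact hrefl p hp
  · rw [if_neg hpy]
    by_cases hle : pLE p Y
    · exact hsum p Y hp ⟨hle, hpy⟩
    · have h1 : intervalF p Y = ∅ := by
        ext r
        rw [mem_intervalF]
        simp only [Finset.notMem_empty, iff_false]
        rintro ⟨h1, h2⟩
        exact hle (pLE_trans h1 h2)
      rw [h1, Finset.sum_empty]

theorem mu_corank_one (μ : PermS → PermS → ℤ)
    (hrefl : ∀ p : PermS, 1 ≤ p.1 → μ p p = 1)
    (hsum : ∀ p q : PermS, 1 ≤ p.1 → pLT p q → ∑ r ∈ intervalF p q, μ p r = 0)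
    {p q : PermS} (hp : 1 ≤ p.1) (hq : q.1 = p.1 + 1) (hle : pLE p q) :
    μ p q = -1 := by
  have hne : p ≠ q := fun h => by rw [h] at hq; omega
  have h1 : intervalF p q = {p, q} := by
    ext r
    rw [mem_intervalF, Finset.mem_insert, Finset.mem_singleton]
    constructor
    · rintro ⟨h1, h2⟩
      have l1 := h1.length_le
      have l2 := h2.length_le
      rcases Nat.lt_or_ge r.1 q.1 with hc | hc
      · exact Or.inl (pLE_eq_of_len h1 (by omega)).symm
      · exact Or.inr (pLE_eq_of_len h2 (by omega))
    · intro h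
      rcases h with h | h <;> simp only [h]
      · exact ⟨pLE_refl p, hle⟩
      · exact ⟨hle, pLE_refl q⟩
  have h2 := hsum p q hp ⟨hle, hne⟩
  rw [h1, Finset.sum_pair hne, hrefl p hp] at h2
  omega

theorem occursAt_full {l n : ℕ} {ρ : Perm' l} {τ : Perm' n} {i : ℕ} (h : OccursAt ρ τ i)
    (hl : l = n) : (⟨l, ρ⟩ : PermS) = ⟨n, τ⟩ := by
  subst hl
  have hb := h.le
  have hi : i = 0 := by omega
  subst hi
  exact congrArg _ (pattLE_antisymm ⟨0, h⟩)

theorem star_formula {m n : ℕ} (hm : 1 ≤ m) (hmn : m < n) (σ : Perm' m) (τ : Perm' n)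
    (hle : PattLE σ τ)
    (μ : PermS → PermS → ℤ)
    (hrefl : ∀ p : PermS, 1 ≤ p.1 → μ p p = 1)
    (hsum : ∀ p q : PermS, 1 ≤ p.1 → pLT p q → ∑ r ∈ intervalF p q, μ p r = 0) :
    μ ⟨m, σ⟩ ⟨n, τ⟩ =
      (if (⟨m, σ⟩ : PermS) = ⟨n - 2, intPerm τ⟩ then 1 else 0)
      + (if pLE ⟨m, σ⟩ ⟨extLen τ, extPerm τ⟩ ∧
            ¬ pLE ⟨extLen τ, extPerm τ⟩ ⟨n - 2, intPerm τ⟩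
          then μ ⟨m, σ⟩ ⟨extLen τ, extPerm τ⟩ else 0)
      - (if (⟨m, σ⟩ : PermS) = ⟨n - 1, window τ 0 (n - 1)⟩ then 1 else 0)
      - (if (⟨m, σ⟩ : PermS) = ⟨n - 1, window τ 1 (n - 1)⟩ then 1 else 0) := by
  have hn2 : 2 ≤ n := by omega
  set p : PermS := ⟨m, σ⟩ with hpdef
  set q : PermS := ⟨n, τ⟩ with hqdef
  set PP : PermS := ⟨n - 1, window τ 0 (n - 1)⟩ with hPdef
  set SS : PermS := ⟨n - 1, window τ 1 (n - 1)⟩ with hSdef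
  set II : PermS := ⟨n - 2, intPerm τ⟩ with hIdef
  set XX : PermS := ⟨extLen τ, extPerm τ⟩ with hXdef
  have hp1 : p.1 = m := rfl
  have hq1 : q.1 = n := rfl
  have hPP1 : PP.1 = n - 1 := rfl
  have hSS1 : SS.1 = n - 1 := rfl
  have hII1 : II.1 = n - 2 := rfl
  have hXX1 : XX.1 = extLen τ := rfl
  have hpq : pLT p q := by
    refine ⟨hle, fun h => ?_⟩
    have h2 : m = n := congrArg Sigma.fst h
    omega
  have hPle : pLE PP q := ⟨0, occursAt_window τ (by omega)⟩
  have hSle : pLE SS q := ⟨1, occursAt_window τ (by omega)⟩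
  set A : Finset PermS := (permsUpTo n).filter (fun r => pLE p r ∧ pLE r PP) with hAdef
  set B : Finset PermS := (permsUpTo n).filter (fun r => pLE p r ∧ pLE r SS) with hBdef
  have f3A : A = intervalF p PP := by
    ext r
    rw [hAdef, Finset.mem_filter, mem_permsUpTo, mem_intervalF]
    constructor
    · rintro ⟨-, h⟩; exact h
    · rintro ⟨h1, h2⟩
      have h3 : r.1 ≤ n - 1 := h2.length_le
      exact ⟨by omega, h1, h2⟩
  have f3B : B = intervalF p SS := by
    ext r
    rw [hBdef, Finset.mem_filter, mem_permsUpTo, mem_intervalF]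
    constructor
    · rintro ⟨-, h⟩; exact h
    · rintro ⟨h1, h2⟩
      have h3 : r.1 ≤ n - 1 := h2.length_le
      exact ⟨by omega, h1, h2⟩
  have f1 : intervalF p q = insert q (A ∪ B) := by
    ext r
    simp only [mem_intervalF, Finset.mem_insert, Finset.mem_union, hAdef, hBdef,
      Finset.mem_filter, mem_permsUpTo]
    constructor
    · rintro ⟨h1, h2⟩
      obtain ⟨i, hocc⟩ := h2
      have hb := hocc.le
      rcases Nat.lt_or_ge r.1 n with hc | hc
      · rcases Nat.eq_zero_or_pos i with hi | hi
        · subst hi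
          refine Or.inr (Or.inl ⟨by omega, h1, ?_⟩)
          exact ⟨_, occursAt_in_window τ (show 0 + (n-1) ≤ n by omega) hocc
            (by omega) (by omega)⟩
        · refine Or.inr (Or.inr ⟨by omega, h1, ?_⟩)
          exact ⟨_, occursAt_in_window τ (show 1 + (n-1) ≤ n by omega) hocc
            (by omega) (by omega)⟩
      · left
        calc r = ⟨r.1, r.2⟩ := (Sigma.eta r).symm
        _ = q := occursAt_full hocc (by omega)
    · intro h
      rcases h with h | ⟨-, h1, h2⟩ | ⟨-, h1, h2⟩
      · simp only [h]
        exact ⟨hpq.1, pLE_refl q⟩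
      · exact ⟨h1, pLE_trans h2 hPle⟩
      · exact ⟨h1, pLE_trans h2 hSle⟩
  have f2 : q ∉ A ∪ B := by
    rw [Finset.mem_union, hAdef, hBdef, Finset.mem_filter, Finset.mem_filter]
    rintro (⟨-, -, h⟩ | ⟨-, -, h⟩) <;>
    · have h2 : n ≤ n - 1 := h.length_le
      omega
  have f4 : ∀ r : PermS, r ∈ A ∩ B ↔
      (r ∈ intervalF p II ∨ ((pLE p XX ∧ ¬ pLE XX II) ∧ r = XX)) := by
    intro r
    simp only [Finset.mem_inter, hAdef, hBdef, Finset.mem_filter, mem_permsUpTo, mem_intervalF]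
    constructor
    · rintro ⟨⟨hbnd, hpr, hrP⟩, -, -, hrS⟩
      by_cases hri : pLE r II
      · exact Or.inl ⟨hpr, hri⟩
      · right
        obtain ⟨t, hoccP⟩ := hrP
        have htb := hoccP.le
        have occ1 : OccursAt r.2 τ (0 + t) := occursAt_of_window (by omega) hoccP
        have ht0 : t = 0 := by
          by_contra ht
          exact hri ⟨_, occursAt_in_window τ (show 1 + (n-2) ≤ n by omega) occ1
            (by omega) (by omega)⟩
        subst ht0
        have occ1' : OccursAt r.2 τ 0 := by simpa using occ1
        obtain ⟨s, hoccS⟩ := hrS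
        have hsb := hoccS.le
        have occ2 : OccursAt r.2 τ (1 + s) := occursAt_of_window (by omega) hoccS
        have h2b := occ2.le
        have hr1 : 0 < r.1 := by have h3 : m ≤ r.1 := hpr.length_le; omega
        have hs : 1 + s = n - r.1 := by
          by_contra hs
          exact hri ⟨_, occursAt_in_window τ (show 1 + (n-2) ≤ n by omega) occ2
            (by omega) (by omega)⟩
        rw [hs] at occ2
        have hw : r = ⟨r.1, window τ 0 r.1⟩ := permS_eq_window occ1'
        have e1 := (occursAt_iff_window (show (0:ℕ) + r.1 ≤ n by omega)).1 occ1'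
        have e2 := (occursAt_iff_window (show n - r.1 + r.1 ≤ n by omega)).1 occ2
        have hbif : HasBifixLen τ r.1 := ⟨hr1, by omega, by rw [← e1, ← e2]⟩
        have hle_e : r.1 ≤ extLen τ := le_extLen hbif
        have hre : r.1 = extLen τ := by
          by_contra hne
          have hlt := prefix_lt_ext_le_interior (τ := τ) hr1 (by omega)
          refine hri ?_
          show PattLE r.2 (intPerm τ)
          rw [e1]
          exact hlt
        have hrX : r = XX := by
          rw [hw]
          exact sigma_eq' hre (by rw [hre]; exact pattLE_refl _)
        refine ⟨⟨?_, ?_⟩, hrX⟩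
        · rw [← hrX]; exact hpr
        · rw [← hrX]; exact hri
    · intro h
      rcases h with ⟨hpr, hri⟩ | ⟨⟨hpX, hXI⟩, hrX⟩
      · have hb2 : r.1 ≤ n - 2 := hri.length_le
        obtain ⟨t, hocc⟩ := hri
        have htb := hocc.le
        have occτ : OccursAt r.2 τ (1 + t) := occursAt_of_window (by omega) hocc
        refine ⟨⟨by omega, hpr, ?_⟩, by omega, hpr, ?_⟩
        · exact ⟨_, occursAt_in_window τ (show 0 + (n-1) ≤ n by omega) occτ
            (by omega) (by omega)⟩
        · exact ⟨_, occursAt_in_window τ (show 1 + (n-1) ≤ n by omega) occτ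
            (by omega) (by omega)⟩
      · simp only [hrX]
        have hm_e : m ≤ extLen τ := hpX.length_le
        obtain ⟨hepos, hen, heq⟩ := hasBifixLen_extLen (τ := τ) (by omega)
        have occ0 : OccursAt (extPerm τ) τ 0 := occursAt_window τ (by omega)
        have occs : OccursAt (extPerm τ) τ (n - extLen τ) := by
          show OccursAt (window τ 0 (extLen τ)) τ (n - extLen τ)
          rw [heq]
          exact occursAt_window τ (by omega)
        refine ⟨⟨by omega, hpX, ?_⟩, by omega, hpX, ?_⟩
        · exact ⟨_, occursAt_in_window τ (show 0 + (n-1) ≤ n by omega) occ0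
            (by omega) (by omega)⟩
        · exact ⟨_, occursAt_in_window τ (show 1 + (n-1) ≤ n by omega) occs
            (by omega) (by omega)⟩
  have sum0 := hsum p q hm hpq
  rw [f1, Finset.sum_insert f2] at sum0
  have hui : ∑ r ∈ (A ∪ B), μ p r + ∑ r ∈ (A ∩ B), μ p r
      = ∑ r ∈ A, μ p r + ∑ r ∈ B, μ p r := Finset.sum_union_inter
  have hA : ∑ r ∈ A, μ p r = if p = PP then 1 else 0 := by
    rw [f3A]; exact sum_interval_eq μ hrefl hsum hm PP
  have hB : ∑ r ∈ B, μ p r = if p = SS then 1 else 0 := by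
    rw [f3B]; exact sum_interval_eq μ hrefl hsum hm SS
  have hAB : ∑ r ∈ (A ∩ B), μ p r = (if p = II then 1 else 0)
      + (if (pLE p XX ∧ ¬ pLE XX II) then μ p XX else 0) := by
    by_cases hcond : pLE p XX ∧ ¬ pLE XX II
    · have hxe : A ∩ B = insert XX (intervalF p II) := by
        ext r
        rw [f4 r, Finset.mem_insert]
        tauto
      have hXnot : XX ∉ intervalF p II := by
        rw [mem_intervalF]
        rintro ⟨-, h⟩
        exact hcond.2 h
      rw [hxe, Finset.sum_insert hXnot, sum_interval_eq μ hrefl hsum hm II, if_pos hcond]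
      exact add_comm _ _
    · have hxe : A ∩ B = intervalF p II := by
        ext r
        rw [f4 r]
        constructor
        · rintro (h | ⟨hc, -⟩)
          · exact h
          · exact absurd hc hcond
        · exact Or.inl
      rw [hxe, sum_interval_eq μ hrefl hsum hm II, if_neg hcond, add_zero]
  linarith [sum0, hui, hA, hB, hAB]
/-- Theorem 2.1, the Möbius function of the consecutive pattern poset:
for `σ ≤ τ`, `μ(σ,τ) = μ(σ,x(τ))` if `|τ|-|σ| > 2`, `σ ≤ x(τ)` and `x(τ) ≰ i(τ)`;
`μ(σ,τ) = 1` if `|τ|-|σ| = 2`, `τ` is not monotone and `σ ∈ {i(τ), x(τ)}`;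
`μ(σ,τ) = (-1)^{|τ|-|σ|}` if `|τ|-|σ| < 2`; and `μ(σ,τ) = 0` otherwise.
Here `μ` is the Möbius function of the poset, characterized by `μ(p,p) = 1` and
`∑_{p ≤ r ≤ q} μ(p,r) = 0` whenever `p < q`. -/
theorem stmt17 {m n : ℕ} (hm : 1 ≤ m) (σ : Perm' m) (τ : Perm' n) (hle : PattLE σ τ)
    (μ : PermS → PermS → ℤ)
    (hrefl : ∀ p : PermS, 1 ≤ p.1 → μ p p = 1)
    (hsum : ∀ p q : PermS, 1 ≤ p.1 → pLT p q → ∑ r ∈ intervalF p q, μ p r = 0) :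
    ((2 < n - m ∧ pLE ⟨m, σ⟩ ⟨extLen τ, extPerm τ⟩ ∧
        ¬ pLE ⟨extLen τ, extPerm τ⟩ ⟨n - 2, intPerm τ⟩) →
      μ ⟨m, σ⟩ ⟨n, τ⟩ = μ ⟨m, σ⟩ ⟨extLen τ, extPerm τ⟩) ∧
    ((n - m = 2 ∧ ¬ IsMonotone τ ∧
        ((⟨m, σ⟩ : PermS) = ⟨n - 2, intPerm τ⟩ ∨ (⟨m, σ⟩ : PermS) = ⟨extLen τ, extPerm τ⟩)) →
      μ ⟨m, σ⟩ ⟨n, τ⟩ = 1) ∧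
    (n - m < 2 → μ ⟨m, σ⟩ ⟨n, τ⟩ = (-1) ^ (n - m)) ∧
    ((¬ (2 < n - m ∧ pLE ⟨m, σ⟩ ⟨extLen τ, extPerm τ⟩ ∧
          ¬ pLE ⟨extLen τ, extPerm τ⟩ ⟨n - 2, intPerm τ⟩)) →
      (¬ (n - m = 2 ∧ ¬ IsMonotone τ ∧
          ((⟨m, σ⟩ : PermS) = ⟨n - 2, intPerm τ⟩ ∨
            (⟨m, σ⟩ : PermS) = ⟨extLen τ, extPerm τ⟩))) →
      ¬ (n - m < 2) → μ ⟨m, σ⟩ ⟨n, τ⟩ = 0) := by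
  have hmn : m ≤ n := hle.length_le
  rcases (by omega : n = m ∨ n = m + 1 ∨ n = m + 2 ∨ m + 3 ≤ n) with hc | hc | hc | hc
  · -- n = m
    subst hc
    have hst : σ = τ := pattLE_antisymm hle
    subst hst
    refine ⟨?_, ?_, ?_, ?_⟩
    · intro h; exact absurd h.1 (by omega)
    · intro h; exact absurd h.1 (by omega)
    · intro _
      rw [Nat.sub_self, pow_zero]
      exact hrefl _ hm
    · intro _ _ h3
      exact absurd (by omega : n - n < 2) h3
  · -- n = m + 1
    subst hc
    refine ⟨?_, ?_, ?_, ?_⟩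
    · intro h; exact absurd h.1 (by omega)
    · intro h; exact absurd h.1 (by omega)
    · intro _
      have h5 : m + 1 - m = 1 := by omega
      rw [h5, pow_one]
      exact mu_corank_one μ hrefl hsum hm rfl hle
    · intro _ _ h3
      exact absurd (by omega : m + 1 - m < 2) h3
  · -- n = m + 2
    subst hc
    have hstar := star_formula hm (by omega) σ τ hle μ hrefl hsum
    have hnP : ¬ (⟨m, σ⟩ : PermS) = ⟨m + 2 - 1, window τ 0 (m + 2 - 1)⟩ := by
      intro h
      have h2 : m = m + 2 - 1 := congrArg Sigma.fst h
      omega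
    have hnS : ¬ (⟨m, σ⟩ : PermS) = ⟨m + 2 - 1, window τ 1 (m + 2 - 1)⟩ := by
      intro h
      have h2 : m = m + 2 - 1 := congrArg Sigma.fst h
      omega
    rw [if_neg hnP, if_neg hnS] at hstar
    have hstar' : μ ⟨m, σ⟩ ⟨m + 2, τ⟩ =
        (if (⟨m, σ⟩ : PermS) = ⟨m + 2 - 2, intPerm τ⟩ then 1 else 0)
        + (if pLE ⟨m, σ⟩ ⟨extLen τ, extPerm τ⟩ ∧
              ¬ pLE ⟨extLen τ, extPerm τ⟩ ⟨m + 2 - 2, intPerm τ⟩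
            then μ ⟨m, σ⟩ ⟨extLen τ, extPerm τ⟩ else 0) := by
      rw [hstar]; ring
    have hext_mono : extLen τ = m + 1 → IsMonotone τ := by
      intro h
      obtain ⟨h1, h2, heq⟩ := hasBifixLen_extLen (τ := τ) (by omega)
      rw [h] at heq
      have hs : m + 2 - (m + 1) = 1 := by omega
      rw [hs] at heq
      exact isMonotone_of_shift heq
    refine ⟨?_, ?_, ?_, ?_⟩
    · intro h; exact absurd h.1 (by omega)
    · rintro ⟨-, hnm, hor⟩
      rcases hor with hI | hX
      · rw [hstar', if_pos hI]
        have hcond : ¬(pLE ⟨m, σ⟩ ⟨extLen τ, extPerm τ⟩ ∧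
            ¬ pLE ⟨extLen τ, extPerm τ⟩ ⟨m + 2 - 2, intPerm τ⟩) := by
          rintro ⟨hpX, hXI⟩
          have hme : m ≤ extLen τ := hpX.length_le
          have hel : extLen τ < m + 2 := (hasBifixLen_extLen (by omega)).2.1
          have hne : extLen τ ≠ m + 1 := fun h => hnm (hext_mono h)
          have he : extLen τ = m := by omega
          have hpx : (⟨m, σ⟩ : PermS) = ⟨extLen τ, extPerm τ⟩ :=
            pLE_eq_of_len hpX he.symm
          refine hXI ?_
          rw [← hpx, hI]
          exact pLE_refl _
        rw [if_neg hcond]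
        norm_num
      · have hplex : pLE (⟨m, σ⟩ : PermS) ⟨extLen τ, extPerm τ⟩ := by
          rw [hX]; exact pLE_refl _
        have hlen : m = extLen τ := congrArg Sigma.fst hX
        by_cases hXI : pLE (⟨extLen τ, extPerm τ⟩ : PermS) ⟨m + 2 - 2, intPerm τ⟩
        · have hXII : (⟨extLen τ, extPerm τ⟩ : PermS) = ⟨m + 2 - 2, intPerm τ⟩ :=
            pLE_eq_of_len hXI (show extLen τ = m + 2 - 2 by omega)
          have hI : (⟨m, σ⟩ : PermS) = ⟨m + 2 - 2, intPerm τ⟩ := hX.trans hXII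
          have hcond : ¬(pLE ⟨m, σ⟩ ⟨extLen τ, extPerm τ⟩ ∧
              ¬ pLE ⟨extLen τ, extPerm τ⟩ ⟨m + 2 - 2, intPerm τ⟩) := fun hc => hc.2 hXI
          rw [hstar', if_pos hI, if_neg hcond]
          norm_num
        · have hT1 : ¬ (⟨m, σ⟩ : PermS) = ⟨m + 2 - 2, intPerm τ⟩ := by
            intro h
            refine hXI ?_
            rw [← hX, h]
            exact pLE_refl _
          have hcond : pLE ⟨m, σ⟩ ⟨extLen τ, extPerm τ⟩ ∧
              ¬ pLE ⟨extLen τ, extPerm τ⟩ ⟨m + 2 - 2, intPerm τ⟩ := ⟨hplex, hXI⟩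
          rw [hstar', if_pos hcond, if_neg hT1, hX,
            hrefl ⟨extLen τ, extPerm τ⟩ (show 1 ≤ extLen τ by omega)]
          norm_num
    · intro h3; exact absurd h3 (by omega)
    · intro _ h2 _
      by_cases hmono : IsMonotone τ
      · have he : extLen τ = m + 1 := extLen_mono hmono (by omega)
        obtain ⟨i, hocc⟩ := hle
        have hσ : σ = window τ i m := (occursAt_iff_window hocc.le).1 hocc
        have hI : (⟨m, σ⟩ : PermS) = ⟨m + 2 - 2, intPerm τ⟩ := by
          refine sigma_eq' (by omega) ?_
          show PattLE σ (intPerm τ)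
          rw [hσ, isMonotone_window_eq hmono hocc.le (show 1 + m ≤ m + 2 by omega)]
          exact pattLE_refl _
        have hσ0 : σ = window τ 0 m := by
          rw [hσ]
          exact isMonotone_window_eq hmono hocc.le (by omega)
        have hpX : pLE (⟨m, σ⟩ : PermS) ⟨extLen τ, extPerm τ⟩ := by
          show PattLE σ (extPerm τ)
          have hw := window_window τ (show 0 + extLen τ ≤ m + 2 by omega)
            (show 0 + m ≤ extLen τ by omega)
          refine ⟨0, ?_⟩
          rw [hσ0]
          exact (occursAt_iff_window (show 0 + m ≤ extLen τ by omega)).2 hw.symm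
        have hXI : ¬ pLE (⟨extLen τ, extPerm τ⟩ : PermS) ⟨m + 2 - 2, intPerm τ⟩ := by
          intro h
          have h4 : extLen τ ≤ m + 2 - 2 := h.length_le
          omega
        have hmuX : μ ⟨m, σ⟩ ⟨extLen τ, extPerm τ⟩ = -1 :=
          mu_corank_one μ hrefl hsum hm he hpX
        rw [hstar', if_pos hI, if_pos ⟨hpX, hXI⟩, hmuX]
        norm_num
      · have hnI : ¬ (⟨m, σ⟩ : PermS) = ⟨m + 2 - 2, intPerm τ⟩ :=
          fun h => h2 ⟨by omega, hmono, Or.inl h⟩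
        have hnX : ¬ (⟨m, σ⟩ : PermS) = ⟨extLen τ, extPerm τ⟩ :=
          fun h => h2 ⟨by omega, hmono, Or.inr h⟩
        have hcond : ¬(pLE ⟨m, σ⟩ ⟨extLen τ, extPerm τ⟩ ∧
            ¬ pLE ⟨extLen τ, extPerm τ⟩ ⟨m + 2 - 2, intPerm τ⟩) := by
          rintro ⟨hpX, hXI⟩
          have hme : m ≤ extLen τ := hpX.length_le
          have hel : extLen τ < m + 2 := (hasBifixLen_extLen (by omega)).2.1
          have hne : extLen τ ≠ m + 1 := fun h => hmono (hext_mono h)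
          have he : extLen τ = m := by omega
          exact hnX (pLE_eq_of_len hpX he.symm)
        rw [hstar', if_neg hnI, if_neg hcond]
        norm_num
  · -- m + 3 ≤ n
    have hstar := star_formula hm (by omega) σ τ hle μ hrefl hsum
    have hnI : ¬ (⟨m, σ⟩ : PermS) = ⟨n - 2, intPerm τ⟩ := by
      intro h
      have h2 : m = n - 2 := congrArg Sigma.fst h
      omega
    have hnP : ¬ (⟨m, σ⟩ : PermS) = ⟨n - 1, window τ 0 (n - 1)⟩ := by
      intro h
      have h2 : m = n - 1 := congrArg Sigma.fst h
      omega
    have hnS : ¬ (⟨m, σ⟩ : PermS) = ⟨n - 1, window τ 1 (n - 1)⟩ := by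
      intro h
      have h2 : m = n - 1 := congrArg Sigma.fst h
      omega
    rw [if_neg hnI, if_neg hnP, if_neg hnS] at hstar
    have hstar' : μ ⟨m, σ⟩ ⟨n, τ⟩ =
        (if pLE ⟨m, σ⟩ ⟨extLen τ, extPerm τ⟩ ∧
              ¬ pLE ⟨extLen τ, extPerm τ⟩ ⟨n - 2, intPerm τ⟩
            then μ ⟨m, σ⟩ ⟨extLen τ, extPerm τ⟩ else 0) := by
      rw [hstar]; ring
    refine ⟨?_, ?_, ?_, ?_⟩
    · rintro ⟨-, hpX, hXI⟩
      rw [hstar', if_pos ⟨hpX, hXI⟩]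
    · intro h; exact absurd h.1 (by omega)
    · intro h3; exact absurd h3 (by omega)
    · intro h1 _ _
      rw [hstar', if_neg (fun hc => h1 ⟨by omega, hc.1, hc.2⟩)]

end
end

section
/- For all n ≥ 2 and all i with 1 ≤ i ≤ ⌊n/2⌋, the number of permutations τ of length n with a bifix of length i, i.e., with τ[1,i] = τ[n−i+1,n], equals n!/i!. -/
/-!
Let `g ∈ S_m` act on `τ ∈ S_n` on the right by permuting the `m` positions starting at `k`.
This multiplies the pattern of that window by `g` and leaves the pattern of any window
disjoint from it unchanged. So when the prefix and suffix windows of length `i` are disjoint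
(`2i ≤ n`), `d τ = τ[1,i]⁻¹ · τ[n-i+1,n]` satisfies `d (τ · g) = d τ · g`. Hence
`S_n ≃ d⁻¹(1) × S_i`, and `d⁻¹(1)` is exactly the set of permutations with a bifix of length `i`.
-/

open scoped Classical

noncomputable section

theorem Tuple.sort_inv_lt_sort_inv_iff {m : ℕ} {α : Type*} [LinearOrder α] {f : Fin m → α}
    (hf : Function.Injective f) (a b : Fin m) :
    (Tuple.sort f)⁻¹ a < (Tuple.sort f)⁻¹ b ↔ f a < f b := by
  have hmono : StrictMono (f ∘ Tuple.sort f) :=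
    (Tuple.monotone_sort f).strictMono_of_injective (hf.comp (Tuple.sort f).injective)
  simpa using (hmono.lt_iff_lt (a := (Tuple.sort f)⁻¹ a) (b := (Tuple.sort f)⁻¹ b)).symm

theorem Equiv.Perm.eq_of_lt_iff_lt {m : ℕ} {ρ σ : Perm (Fin m)}
    (h : ∀ a b, ρ a < ρ b ↔ σ a < σ b) : ρ = σ := by
  have hstrict : StrictMono (σ * ρ⁻¹) := fun a b hab => by
    simpa using (h (ρ⁻¹ a) (ρ⁻¹ b)).mp (by simpa using hab)
  exact (mul_inv_eq_one.mp ((Equiv.Perm.monotone_iff _).mp hstrict.monotone)).symm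

def windowEmb {k m n : ℕ} (h : k + m ≤ n) : Fin m ↪ Fin n :=
  ⟨fun a => ⟨k + a, by omega⟩, fun a b hab => Fin.ext (by simpa using hab)⟩

@[simp]
theorem windowEmb_val {k m n : ℕ} (h : k + m ≤ n) (a : Fin m) : (windowEmb h a : ℕ) = k + a :=
  rfl

section Window

variable {j k m n : ℕ}

theorem window_lt_window_iff (τ : Perm' n) (h : j + m ≤ n) (a b : Fin m) :
    window τ j m a < window τ j m b ↔ τ (windowEmb h a) < τ (windowEmb h b) := by
  rw [window, dif_pos h]
  exact Tuple.sort_inv_lt_sort_inv_iff (τ.injective.comp (windowEmb h).injective) a b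

theorem window_eq_of_lt_iff_lt (τ : Perm' n) (h : j + m ≤ n) {σ : Perm' m}
    (hσ : ∀ a b, τ (windowEmb h a) < τ (windowEmb h b) ↔ σ a < σ b) :
    window τ j m = σ :=
  Equiv.Perm.eq_of_lt_iff_lt fun a b => (window_lt_window_iff τ h a b).trans (hσ a b)

theorem window_mul_viaEmbedding_of_add_le (τ : Perm' n) (hjk : j + m ≤ k) {m' : ℕ}
    (hk : k + m' ≤ n) (g : Perm' m') :
    window (τ * g.viaEmbedding (windowEmb hk)) j m = window τ j m := by
  have hj : j + m ≤ n := by omega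
  refine window_eq_of_lt_iff_lt _ hj fun a b => ?_
  have hfix : ∀ x : Fin m, g.viaEmbedding (windowEmb hk) (windowEmb hj x) = windowEmb hj x :=
    fun x => Equiv.Perm.viaEmbedding_apply_of_notMem _ _ _ (by
      rintro ⟨c, hc⟩
      have := congrArg Fin.val hc
      simp only [windowEmb_val] at this
      omega)
  rw [Equiv.Perm.mul_apply, Equiv.Perm.mul_apply, hfix, hfix, window_lt_window_iff]

theorem window_mul_viaEmbedding (τ : Perm' n) (hk : k + m ≤ n) (g : Perm' m) :
    window (τ * g.viaEmbedding (windowEmb hk)) k m = window τ k m * g := by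
  refine window_eq_of_lt_iff_lt _ hk fun a b => ?_
  rw [Equiv.Perm.mul_apply, Equiv.Perm.mul_apply, Equiv.Perm.viaEmbedding_apply,
    Equiv.Perm.viaEmbedding_apply, Equiv.Perm.mul_apply, Equiv.Perm.mul_apply,
    window_lt_window_iff]

end Window

def equivFiberOneProd {G H : Type*} [Monoid G] [Group H] (s : H →* G) (d : G → H)
    (hd : ∀ x h, d (x * s h) = d x * h) : G ≃ {x // d x = 1} × H where
  toFun x := (⟨x * s (d x)⁻¹, by rw [hd, mul_inv_cancel]⟩, d x)
  invFun p := p.1 * s p.2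
  left_inv x := by simp [mul_assoc, ← map_mul]
  right_inv := fun ⟨⟨x, hx⟩, h⟩ => by simp [hd, hx, mul_assoc, ← map_mul]

theorem card_filter_window_eq_window {j k m n : ℕ} (hjk : j + m ≤ k) (hk : k + m ≤ n) :
    (Finset.univ.filter fun τ : Perm' n => window τ j m = window τ k m).card =
      n.factorial / m.factorial := by
  let d : Perm' n → Perm' m := fun τ => (window τ j m)⁻¹ * window τ k m
  have hd : ∀ τ g, d (τ * Equiv.Perm.viaEmbeddingHom (windowEmb hk) g) = d τ * g := by
    intro τ g
    simp only [d, Equiv.Perm.viaEmbeddingHom_apply, window_mul_viaEmbedding_of_add_le τ hjk hk,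
      window_mul_viaEmbedding, mul_assoc]
  have hcard := Fintype.card_congr (equivFiberOneProd _ d hd)
  simp only [Fintype.card_prod, Fintype.card_perm, Fintype.card_fin, d, inv_mul_eq_one,
    Fintype.card_subtype] at hcard
  rw [hcard, Nat.mul_div_cancel _ m.factorial_pos]

theorem stmt19_general {n : ℕ} (i : ℕ) (hi2 : i ≤ n / 2) :
    (Finset.univ.filter fun τ : Perm' n => window τ 0 i = window τ (n - i) i).card =
      Nat.factorial n / Nat.factorial i :=
  card_filter_window_eq_window (by omega) (by omega)

/-- from the proof of Lemma 6.4: for `n ≥ 2` and `1 ≤ i ≤ ⌊n/2⌋`, the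
number of permutations `τ` of length `n` with `τ[1,i] = τ[n-i+1,n]` is `n!/i!`. -/
theorem stmt19 {n : ℕ} (hn : 2 ≤ n) (i : ℕ) (hi1 : 1 ≤ i) (hi2 : i ≤ n / 2) :
    (Finset.univ.filter fun τ : Perm' n => window τ 0 i = window τ (n - i) i).card =
      Nat.factorial n / Nat.factorial i :=
  stmt19_general i hi2

end
end
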